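/- Let p : ℕ → ℝ be nonnegative with ∑'_{k} p k = 1, and let c₁ > 0 be such that p k ≥ c₁ · k^(−3/2) for every k ≥ 1. Let ε be a real with 0 < ε ≤ 1 and let n ≥ 1 be an integer with ε · n ≥ 1. Then ∑_{k : ℕ, k ≥ 1, n(1−ε) ≤ k ≤ n(1+ε)} p k ≥ (c₁ / (2·√2)) · ε / √n. -/

import Mathlib

/-!
Every integer `k` with `n ≤ k ≤ n(1+ε)` lies in the window, and since `ε ≤ 1` it satisfies
`k ≤ 2n`, so it carries mass at least `c₁ (2n)^{-3/2}`. There are more than `εn` such integers,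
and `εn · c₁ (2n)^{-3/2} = c₁ ε / (2√2 √n)`.
-/

open Finset

lemma Real.rpow_neg_three_halves {x : ℝ} (hx : 0 ≤ x) : x ^ (-(3 / 2) : ℝ) = (x * √x)⁻¹ := by
  rw [Real.rpow_neg hx, show (3 / 2 : ℝ) = 1 + 1 / 2 by norm_num,
    Real.rpow_add' hx (by norm_num), Real.rpow_one, Real.sqrt_eq_rpow]

lemma Nat.sub_lt_card_Icc_floor {x : ℝ} {n : ℕ} (hnx : (n : ℝ) ≤ x) :
    x - n < #(Icc n ⌊x⌋₊) := by
  have hn : n ≤ ⌊x⌋₊ := Nat.le_floor hnx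
  rw [Nat.card_Icc, Nat.cast_sub (by omega)]
  push_cast
  linarith [Nat.lt_floor_add_one x]

lemma Summable.sum_le_tsum_subtype {ι α : Type*} [AddCommMonoid α] [PartialOrder α]
    [IsOrderedAddMonoid α] [TopologicalSpace α] [OrderClosedTopology α] {f : ι → α} {S : Set ι}
    (hf : Summable fun i : S => f i) (hnn : ∀ i ∈ S, 0 ≤ f i) {s : Finset ι} (hs : ↑s ⊆ S) :
    ∑ i ∈ s, f i ≤ ∑' i : S, f i := by
  classical
  rw [← Finset.sum_subtype_of_mem f (p := (· ∈ S)) hs]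
  exact hf.sum_le_tsum _ fun i _ => hnn i i.2

lemma Icc_floor_subset_window {n : ℕ} {ε : ℝ} (hn : 1 ≤ n) (hε : 0 ≤ ε) :
    ↑(Icc n ⌊n * (1 + ε)⌋₊) ⊆
      {k : ℕ | 1 ≤ k ∧ (n : ℝ) * (1 - ε) ≤ k ∧ (k : ℝ) ≤ n * (1 + ε)} := by
  intro k hk
  obtain ⟨hnk, hkm⟩ := Finset.mem_Icc.mp hk
  have hnkR : (n : ℝ) ≤ k := by exact_mod_cast hnk
  refine ⟨hn.trans hnk, by nlinarith, ?_⟩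
  exact (Nat.cast_le.mpr hkm).trans (Nat.floor_le (by positivity))

theorem stmt_13_general (p : ℕ → ℝ) (hnn : ∀ k, 0 ≤ p k) (hsum : ∑' k, p k = 1)
    (c₁ : ℝ) (hc₁ : 0 < c₁)
    (hlow : ∀ k : ℕ, 1 ≤ k → c₁ * (k : ℝ) ^ (-(3 / 2) : ℝ) ≤ p k)
    (ε : ℝ) (hε0 : 0 < ε) (hε1 : ε ≤ 1)
    (n : ℕ) (hn : 1 ≤ n) :
    (c₁ / (2 * Real.sqrt 2)) * ε / Real.sqrt n
      ≤ ∑' k : {k : ℕ // 1 ≤ k ∧ (n : ℝ) * (1 - ε) ≤ (k : ℝ) ∧ (k : ℝ) ≤ (n : ℝ) * (1 + ε)},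
          p (k : ℕ) := by
  have hp : Summable p := by
    by_contra h
    simp [tsum_eq_zero_of_not_summable h] at hsum
  set I := Icc n ⌊n * (1 + ε)⌋₊
  have hwindow := Icc_floor_subset_window hn hε0.le
  have hmass : ∀ k ∈ I, c₁ * (2 * n : ℝ) ^ (-(3 / 2) : ℝ) ≤ p k := fun k hk => by
    obtain ⟨hk1, -, hkε⟩ := hwindow hk
    have hk0 : (0 : ℝ) < k := by exact_mod_cast hk1
    have hk2n : (k : ℝ) ≤ 2 * n := by nlinarith
    exact (mul_le_mul_of_nonneg_left
      (Real.rpow_le_rpow_of_nonpos hk0 hk2n (by norm_num)) hc₁.le).trans (hlow k hk1)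
  calc (c₁ / (2 * Real.sqrt 2)) * ε / Real.sqrt n
      = (ε * n) * (c₁ * (2 * n : ℝ) ^ (-(3 / 2) : ℝ)) := by
        rw [Real.rpow_neg_three_halves (by positivity), Real.sqrt_mul (by norm_num)]
        field_simp
    _ ≤ #I * (c₁ * (2 * n : ℝ) ^ (-(3 / 2) : ℝ)) := by
        gcongr
        linarith [Nat.sub_lt_card_Icc_floor (by nlinarith : (n : ℝ) ≤ n * (1 + ε))]
    _ ≤ ∑ k ∈ I, p k := by simpa using card_nsmul_le_sum I p _ hmass
    _ ≤ _ := (hp.subtype _).sum_le_tsum_subtype (fun k _ => hnn k) hwindow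

/-- Window-mass estimate for approximate-size Boltzmann sampling: if
`p k ≥ c₁ k^{-3/2}` for all `k ≥ 1`, then the probability that the size lies
in `[n(1-ε), n(1+ε)]` is at least `(c₁/(2√2)) ε / √n`. -/
theorem stmt_13 (p : ℕ → ℝ) (hnn : ∀ k, 0 ≤ p k) (hsum : ∑' k, p k = 1)
    (c₁ : ℝ) (hc₁ : 0 < c₁)
    (hlow : ∀ k : ℕ, 1 ≤ k → c₁ * (k : ℝ) ^ (-(3 / 2) : ℝ) ≤ p k)
    (ε : ℝ) (hε0 : 0 < ε) (hε1 : ε ≤ 1)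
    (n : ℕ) (hn : 1 ≤ n) (hεn : 1 ≤ ε * n) :
    (c₁ / (2 * Real.sqrt 2)) * ε / Real.sqrt n
      ≤ ∑' k : {k : ℕ // 1 ≤ k ∧ (n : ℝ) * (1 - ε) ≤ (k : ℝ) ∧ (k : ℝ) ≤ (n : ℝ) * (1 + ε)},
          p (k : ℕ) :=
  stmt_13_general p hnn hsum c₁ hc₁ hlow ε hε0 hε1 n hn
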